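/- arXiv:math/0512575 — 5 statements merged into one kernel-verified Lean document; each statement's English description precedes it below -/
import Mathlib

section
/- Any two images of a right adjoint functor are equivalent as categories. Precisely: given a right adjoint functor G : E' → E and two factorisations G = U∘Ψ = U'∘Ψ' where Ψ : E' → M and Ψ' : E' → M' are coreflections (right adjoints with fully faithful left adjoints Φ, Φ') and U : M → E, U' : M' → E are isomorphism-reflecting right adjoints, the categories M and M' are equivalent, with equivalence given by Ψ'∘Φ and Ψ∘Φ'. -/
open CategoryTheory

/-- Auxiliary: if the unit of `Φ ⊣ Ψ` is an isomorphism and `Ψ` inverts the counit of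
`Φ' ⊣ Ψ'`, then the round trip `(Φ ⋙ Ψ') ⋙ (Φ' ⋙ Ψ)` is isomorphic to the identity. -/
noncomputable def auxIso {E' M M' : Type*} [Category E'] [Category M] [Category M']
    (Φ : M ⥤ E') (Ψ : E' ⥤ M) (adj : Φ ⊣ Ψ) [IsIso adj.unit]
    (Φ' : M' ⥤ E') (Ψ' : E' ⥤ M') (adj' : Φ' ⊣ Ψ')
    (h : ∀ X : E', IsIso (Ψ.map (adj'.counit.app X))) :
    (Φ ⋙ Ψ') ⋙ (Φ' ⋙ Ψ) ≅ 𝟭 M := by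
  refine NatIso.ofComponents (fun m =>
    (@asIso _ _ _ _ _ (h (Φ.obj m))) ≪≫ ((asIso adj.unit).app m).symm) ?_
  intro m m' f
  dsimp
  have h1 : Ψ.map (Φ'.map (Ψ'.map (Φ.map f))) ≫ Ψ.map (adj'.counit.app (Φ.obj m')) =
      Ψ.map (adj'.counit.app (Φ.obj m)) ≫ Ψ.map (Φ.map f) := by
    rw [← Ψ.map_comp, ← Ψ.map_comp]
    exact congrArg Ψ.map (adj'.counit.naturality (Φ.map f))
  have hη : ∀ X, IsIso (adj.unit.app X) := fun X => inferInstance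
  have h2 : Ψ.map (Φ.map f) ≫ inv (adj.unit.app m') = inv (adj.unit.app m) ≫ f := by
    have hnat := adj.unit.naturality f
    dsimp at hnat
    rw [IsIso.comp_inv_eq, Category.assoc, hnat, IsIso.inv_hom_id_assoc]
  simp only [NatIso.isIso_inv_app]
  rw [← Category.assoc, h1, Category.assoc, h2, Category.assoc]

/-- Any two images of a right adjoint functor `G : E' ⥤ E` are equivalent as categories.
An image-factorisation of `G` is `G ≅ Ψ ⋙ U` where `Ψ` is a coreflection (right adjoint with
fully faithful left adjoint `Φ`) and `U` is a right-conservative (isomorphism-reflecting right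
adjoint) functor.  The equivalence between two images `M` and `M'` is given by `Φ ⋙ Ψ'` and
`Φ' ⋙ Ψ`. -/
theorem stmt_0 {E' E M M' : Type*} [Category E'] [Category E] [Category M] [Category M']
    (G : E' ⥤ E) [G.IsRightAdjoint]
    (Φ : M ⥤ E') (Ψ : E' ⥤ M) (adj : Φ ⊣ Ψ) [Φ.Full] [Φ.Faithful]
    (Φ' : M' ⥤ E') (Ψ' : E' ⥤ M') (adj' : Φ' ⊣ Ψ') [Φ'.Full] [Φ'.Faithful]
    (U : M ⥤ E) [U.IsRightAdjoint] [U.ReflectsIsomorphisms]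
    (U' : M' ⥤ E) [U'.IsRightAdjoint] [U'.ReflectsIsomorphisms]
    (hU : Ψ ⋙ U ≅ G) (hU' : Ψ' ⋙ U' ≅ G) :
    (Φ ⋙ Ψ').IsEquivalence ∧ (Φ' ⋙ Ψ).IsEquivalence := by
  -- `Ψ` inverts a morphism iff `G` does (and likewise for `Ψ'`)
  have key : ∀ {X Y : E'} (f : X ⟶ Y), IsIso (Ψ.map f) ↔ IsIso (G.map f) := by
    intro X Y f
    constructor
    · intro h
      have : IsIso ((Ψ ⋙ U).map f) := by dsimp; infer_instance
      exact (NatIso.isIso_map_iff hU f).mp this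
    · intro h
      have h2 : IsIso ((Ψ ⋙ U).map f) := (NatIso.isIso_map_iff hU f).mpr h
      have : IsIso (U.map (Ψ.map f)) := h2
      exact isIso_of_reflects_iso (Ψ.map f) U
  have key' : ∀ {X Y : E'} (f : X ⟶ Y), IsIso (Ψ'.map f) ↔ IsIso (G.map f) := by
    intro X Y f
    constructor
    · intro h
      have : IsIso ((Ψ' ⋙ U').map f) := by dsimp; infer_instance
      exact (NatIso.isIso_map_iff hU' f).mp this
    · intro h
      have h2 : IsIso ((Ψ' ⋙ U').map f) := (NatIso.isIso_map_iff hU' f).mpr h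
      have : IsIso (U'.map (Ψ'.map f)) := h2
      exact isIso_of_reflects_iso (Ψ'.map f) U'
  -- the units are isomorphisms since `Φ`, `Φ'` are fully faithful
  haveI hu : IsIso adj.unit := inferInstance
  haveI hu' : IsIso adj'.unit := inferInstance
  -- each coreflection inverts its own counit (triangle identity)
  have hΨε : ∀ X : E', IsIso (Ψ.map (adj.counit.app X)) := by
    intro X
    have h1 : IsIso (adj.unit.app (Ψ.obj X) ≫ Ψ.map (adj.counit.app X)) := by
      rw [adj.right_triangle_components]; exact IsIso.id _
    exact IsIso.of_isIso_comp_left (adj.unit.app (Ψ.obj X)) (Ψ.map (adj.counit.app X))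
  have hΨ'ε' : ∀ X : E', IsIso (Ψ'.map (adj'.counit.app X)) := by
    intro X
    have h1 : IsIso (adj'.unit.app (Ψ'.obj X) ≫ Ψ'.map (adj'.counit.app X)) := by
      rw [adj'.right_triangle_components]; exact IsIso.id _
    exact IsIso.of_isIso_comp_left (adj'.unit.app (Ψ'.obj X)) (Ψ'.map (adj'.counit.app X))
  -- hence each coreflection inverts the other's counit, through `G`
  have hΨε' : ∀ X : E', IsIso (Ψ.map (adj'.counit.app X)) := fun X =>
    (key _).mpr ((key' _).mp (hΨ'ε' X))
  have hΨ'ε : ∀ X : E', IsIso (Ψ'.map (adj.counit.app X)) := fun X =>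
    (key' _).mpr ((key _).mp (hΨε X))
  -- the two round trips are isomorphic to the identities
  have α : (Φ ⋙ Ψ') ⋙ (Φ' ⋙ Ψ) ≅ 𝟭 M := auxIso Φ Ψ adj Φ' Ψ' adj' hΨε'
  have β : (Φ' ⋙ Ψ) ⋙ (Φ ⋙ Ψ') ≅ 𝟭 M' := auxIso Φ' Ψ' adj' Φ Ψ adj hΨ'ε
  let e : M ≌ M' := CategoryTheory.Equivalence.mk (Φ ⋙ Ψ') (Φ' ⋙ Ψ) α.symm β
  exact ⟨e.isEquivalence_functor, e.isEquivalence_inverse⟩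
end

section
/- Let G : E' → E be a right adjoint functor with two image-factorisations (Φ₁, M₁, U₁) and (Φ₂, M₂, U₂). If d* : M₁ ⇄ M₂ : d_* is an adjunction which is well-adapted, meaning Φ₁ ≅ Φ₂ ∘ d* and U₁ ∘ d_* ≅ U₂, then (d*, d_*) is an adjoint equivalence of categories. -/
/-!
Since `Φ₁ ≅ d* ⋙ Φ₂` with `Φ₁` fully faithful and `Φ₂` faithful, `d*` is fully faithful, so the
unit of `d* ⊣ d_*` is invertible and, by a triangle identity, so is `d_*` applied to the counit.
As `d_* ⋙ U₁ ≅ U₂` is conservative, `d_*` reflects isomorphisms, hence the counit is invertible too.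
-/

open CategoryTheory

namespace CategoryTheory.Adjunction

variable {C D : Type*} [Category C] [Category D] {L : C ⥤ D} {R : D ⥤ C}

lemma isIso_counit_of_full_of_faithful_of_reflectsIsomorphisms (adj : L ⊣ R) [L.Full] [L.Faithful]
    [R.ReflectsIsomorphisms] : IsIso adj.counit := by
  rw [NatTrans.isIso_iff_isIso_app]
  intro Y
  have : IsIso (R.map (adj.counit.app Y)) :=
    inferInstanceAs (IsIso ((Functor.whiskerRight adj.counit R).app Y))
  exact isIso_of_reflects_iso _ R

lemma isEquivalence_left_of_full_of_faithful_of_reflectsIsomorphisms (adj : L ⊣ R) [L.Full]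
    [L.Faithful] [R.ReflectsIsomorphisms] : L.IsEquivalence :=
  have := adj.isIso_counit_of_full_of_faithful_of_reflectsIsomorphisms
  adj.toEquivalence.isEquivalence_functor

end CategoryTheory.Adjunction

theorem stmt_1_general {E' E M₁ M₂ : Type*} [Category E'] [Category E] [Category M₁] [Category M₂]
    (Φ₁ : M₁ ⥤ E') [Φ₁.Full] [Φ₁.Faithful] (Φ₂ : M₂ ⥤ E') [Φ₂.Faithful]
    (U₁ : M₁ ⥤ E) (U₂ : M₂ ⥤ E) [U₂.ReflectsIsomorphisms]
    (dStar : M₁ ⥤ M₂) (dLower : M₂ ⥤ M₁) (dadj : dStar ⊣ dLower)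
    (h1 : Φ₁ ≅ dStar ⋙ Φ₂) (h2 : dLower ⋙ U₁ ≅ U₂) :
    dStar.IsEquivalence ∧ dLower.IsEquivalence := by
  have : (dStar ⋙ Φ₂).Full := Functor.Full.of_iso h1
  have : (dStar ⋙ Φ₂).Faithful := Functor.Faithful.of_iso h1
  have : dStar.Full := Functor.Full.of_comp_faithful dStar Φ₂
  have : dStar.Faithful := Functor.Faithful.of_comp dStar Φ₂
  have : (dLower ⋙ U₁).ReflectsIsomorphisms := reflectsIsomorphisms_of_iso h2.symm
  have : dLower.ReflectsIsomorphisms := reflectsIsomorphisms_of_comp dLower U₁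
  have := dadj.isEquivalence_left_of_full_of_faithful_of_reflectsIsomorphisms
  exact ⟨this, dadj.isEquivalence_right_of_isEquivalence_left⟩

/-- Any well-adapted adjunction between two image-factorisations `(Φ₁, M₁, U₁)` and
`(Φ₂, M₂, U₂)` of the same right adjoint functor `G : E' ⥤ E` is an adjoint equivalence:
both `d*` and `d_*` are equivalences of categories. -/
theorem stmt_1 {E' E M₁ M₂ : Type*} [Category E'] [Category E] [Category M₁] [Category M₂]
    (G : E' ⥤ E) [G.IsRightAdjoint]
    (Φ₁ : M₁ ⥤ E') (Ψ₁ : E' ⥤ M₁) (adj₁ : Φ₁ ⊣ Ψ₁) [Φ₁.Full] [Φ₁.Faithful]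
    (Φ₂ : M₂ ⥤ E') (Ψ₂ : E' ⥤ M₂) (adj₂ : Φ₂ ⊣ Ψ₂) [Φ₂.Full] [Φ₂.Faithful]
    (U₁ : M₁ ⥤ E) [U₁.IsRightAdjoint] [U₁.ReflectsIsomorphisms]
    (U₂ : M₂ ⥤ E) [U₂.IsRightAdjoint] [U₂.ReflectsIsomorphisms]
    (hU₁ : Ψ₁ ⋙ U₁ ≅ G) (hU₂ : Ψ₂ ⋙ U₂ ≅ G)
    (dStar : M₁ ⥤ M₂) (dLower : M₂ ⥤ M₁) (dadj : dStar ⊣ dLower)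
    (h1 : Φ₁ ≅ dStar ⋙ Φ₂) (h2 : dLower ⋙ U₁ ≅ U₂) :
    dStar.IsEquivalence ∧ dLower.IsEquivalence :=
  stmt_1_general Φ₁ Φ₂ U₁ U₂ dStar dLower dadj h1 h2
end

section
/- Two distinct order-preserving maps φ₁, φ₂ : [m] → [1] in the simplex category Δ have the same image under Segal's functor γ : Δ → Γ if and only if both φ₁ and φ₂ factor through [0]. Consequently, the Γ-set γ*Γ(−,1) restricted along γ is isomorphic to the quotient simplicial set Δ[1]/∂Δ[1]. -/
/-- Segal's functor `γ` on a simplicial operator. -/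
def segal {k m : ℕ} (φ : Fin (k+1) → Fin (m+1)) : Fin k → Finset (Fin m) :=
  fun i => Finset.univ.filter (fun j : Fin m => φ i.castSucc < j.succ ∧ j.succ ≤ φ i.succ)

/-! A monotone map `[m] → [1]` is either constant or the step function jumping at a unique
`i`; `segal` sends every constant map to the empty operator and the step at `i` to the operator
whose only nonempty value is at `i`. Hence `segal` identifies exactly the constant maps and hits
every operator `m → 1`. -/

theorem segal_const {k m : ℕ} (c : Fin (m+1)) :
    segal (fun _ : Fin (k+1) => c) = fun _ => ∅ := by
  funext i
  ext j
  simp only [segal, Finset.mem_filter, Finset.mem_univ, true_and, Finset.notMem_empty,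
    iff_false, not_and, not_le, imp_self]

theorem mem_segal_iff {m : ℕ} (φ : Fin (m+1) → Fin 2) (i : Fin m) (j : Fin 1) :
    j ∈ segal φ i ↔ φ i.castSucc = 0 ∧ φ i.succ = 1 := by
  have := j.isLt
  simp only [segal, Finset.mem_filter, Finset.mem_univ, true_and, Fin.lt_def, Fin.le_def,
    Fin.val_succ, Fin.ext_iff, Fin.val_zero, Fin.val_one]
  omega

theorem eq_const_of_castSucc_eq_succ {α : Type*} {m : ℕ} (φ : Fin (m+1) → α)
    (h : ∀ i : Fin m, φ i.castSucc = φ i.succ) (x : Fin (m+1)) : φ x = φ 0 := by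
  induction x using Fin.induction with
  | zero => rfl
  | succ i ih => rw [← h i, ih]

theorem exists_jump_of_monotone {m : ℕ} {φ : Fin (m+1) → Fin 2} (hφ : Monotone φ)
    (hconst : ¬ ∃ c, ∀ x, φ x = c) : ∃ i : Fin m, φ i.castSucc = 0 ∧ φ i.succ = 1 := by
  by_contra! hjump
  refine hconst ⟨φ 0, eq_const_of_castSucc_eq_succ φ fun i => ?_⟩
  have hle := hφ (Fin.castSucc_le_succ i)
  have hne := hjump i
  generalize φ i.castSucc = a, φ i.succ = b at hle hne ⊢
  revert a b
  decide

def stepAt {m : ℕ} (i : Fin m) (x : Fin (m+1)) : Fin 2 :=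
  if x ≤ i.castSucc then 0 else 1

theorem monotone_stepAt {m : ℕ} (i : Fin m) : Monotone (stepAt i) := by
  intro a b hab
  unfold stepAt
  split_ifs with ha hb hb
  · exact le_rfl
  · exact Fin.zero_le _
  · exact absurd (hab.trans hb) ha
  · exact le_rfl

theorem eq_stepAt_of_jump {m : ℕ} {φ : Fin (m+1) → Fin 2} (hφ : Monotone φ) {i : Fin m}
    (h0 : φ i.castSucc = 0) (h1 : φ i.succ = 1) : φ = stepAt i := by
  funext x
  unfold stepAt
  split_ifs with hx
  · exact Fin.le_zero_iff.mp (h0 ▸ hφ hx)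
  · have hle : (1 : Fin 2) ≤ φ x := h1 ▸ hφ (Fin.castSucc_lt_iff_succ_le.mp (not_le.mp hx))
    exact le_antisymm (Fin.le_last _) hle

theorem segal_stepAt {m : ℕ} (i₀ i : Fin m) :
    segal (stepAt i₀) i = if i = i₀ then Finset.univ else ∅ := by
  ext j
  rw [mem_segal_iff]
  simp only [stepAt, Fin.ext_iff, Fin.le_def, Fin.val_succ, Fin.val_castSucc]
  split_ifs <;> simp_all <;> omega

theorem eq_of_segal_eq {m : ℕ} {φ ψ : Fin (m+1) → Fin 2} (hφ : Monotone φ) (hψ : Monotone ψ)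
    (hφc : ¬ ∃ c, ∀ x, φ x = c) (h : segal φ = segal ψ) : φ = ψ := by
  obtain ⟨i, h0, h1⟩ := exists_jump_of_monotone hφ hφc
  have hψi : (0 : Fin 1) ∈ segal ψ i := h ▸ (mem_segal_iff φ i 0).mpr ⟨h0, h1⟩
  rw [mem_segal_iff] at hψi
  rw [eq_stepAt_of_jump hφ h0 h1, eq_stepAt_of_jump hψ hψi.1 hψi.2]

theorem eq_empty_or_eq_ite_of_pairwise_disjoint {m : ℕ} {g : Fin m → Finset (Fin 1)}
    (hg : ∀ i j, i ≠ j → Disjoint (g i) (g j)) :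
    g = (fun _ => ∅) ∨ ∃ i₀, g = fun i => if i = i₀ then Finset.univ else ∅ := by
  by_cases hempty : ∀ i, g i = ∅
  · exact Or.inl (funext hempty)
  push Not at hempty
  obtain ⟨i₀, hi₀⟩ := hempty
  obtain ⟨j, hj⟩ := hi₀
  have hfull : g i₀ = Finset.univ :=
    Finset.eq_univ_of_forall fun k => Subsingleton.elim j k ▸ hj
  refine Or.inr ⟨i₀, funext fun i => ?_⟩
  split_ifs with hi
  · exact hi ▸ hfull
  · exact Finset.eq_empty_of_forall_notMem fun k hk =>
      Finset.disjoint_left.mp (hg i i₀ hi) hk (hfull ▸ Finset.mem_univ k)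

/-- Two distinct order-preserving maps `φ₁, φ₂ : [m] → [1]` have the same image under
Segal's functor `γ : Δ → Γ` if and only if both factor through `[0]`, i.e. are constant.
Consequently, the simplicial set `γ*Γ[1]` is the quotient `Δ[1]/∂Δ[1]`: levelwise, `segal`
maps the `m`-simplices of `Δ[1]` onto the `Γ`-operators `m → 1`, identifying exactly the
constant maps (the simplices of `∂Δ[1]` and their degeneracies). -/
theorem stmt_10 (m : ℕ) :
    (∀ φ₁ φ₂ : Fin (m+1) → Fin 2, Monotone φ₁ → Monotone φ₂ → φ₁ ≠ φ₂ →
      (segal φ₁ = segal φ₂ ↔ ((∃ c, ∀ x, φ₁ x = c) ∧ (∃ c, ∀ x, φ₂ x = c)))) ∧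
    (∀ g : {g : Fin m → Finset (Fin 1) // ∀ i j, i ≠ j → Disjoint (g i) (g j)},
      ∃ φ : Fin (m+1) → Fin 2, Monotone φ ∧ segal φ = g.1) := by
  refine ⟨fun φ₁ φ₂ h₁ h₂ hne => ⟨fun h => ?_, ?_⟩, fun ⟨g, hg⟩ => ?_⟩
  · by_contra hconst
    rcases not_and_or.mp hconst with hc | hc
    · exact hne (eq_of_segal_eq h₁ h₂ hc h)
    · exact hne (eq_of_segal_eq h₂ h₁ hc h.symm).symm
  · rintro ⟨⟨c₁, hc₁⟩, ⟨c₂, hc₂⟩⟩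
    rw [funext hc₁, funext hc₂, segal_const, segal_const]
  · rcases eq_empty_or_eq_ite_of_pairwise_disjoint hg with rfl | ⟨i₀, rfl⟩
    · exact ⟨fun _ => 0, monotone_const, segal_const 0⟩
    · exact ⟨stepAt i₀, monotone_stepAt i₀, funext (segal_stepAt i₀)⟩
end

section
/- The product of standard simplices Δ[m] × Δ[n] in simplicial sets decomposes as a union of (m+n)!/(m!·n!) copies of Δ[m+n], one for each (m,n)-shuffle: the non-degenerate (m+n)-simplices of Δ[m] × Δ[n] are exactly the injective order-preserving maps [m+n] → [m] × [n] (with the product order) that are surjective onto the extremes, and these are in bijection with (m,n)-shuffles; every simplex of Δ[m] × Δ[n] is a face of one of them. -/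
namespace Stmt15Test
open Finset

variable {m n : ℕ}

/-- key sum lemma -/
lemma sum_eq' {m n : ℕ} (f : Fin (m+n+1) → Fin (m+1) × Fin (n+1))
    (hm : Monotone f) (hi : Function.Injective f) (k : Fin (m+n+1)) :
    ((f k).1 : ℕ) + ((f k).2 : ℕ) = k := by
  set s : Fin (m+n+1) → Fin (m+n+1) := fun k =>
    ⟨(f k).1 + (f k).2, by have h1 := (f k).1.is_le; have h2 := (f k).2.is_le; omega⟩ with hs
  have hsm : StrictMono s := by
    intro i j hij
    have hle : f i ≤ f j := hm hij.le
    have hne : f i ≠ f j := fun h => absurd (hi h) hij.ne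
    rw [Prod.le_def] at hle
    have h1 : ((f i).1 : ℕ) ≤ (f j).1 := hle.1
    have h2 : ((f i).2 : ℕ) ≤ (f j).2 := hle.2
    have : ((f i).1 : ℕ) ≠ (f j).1 ∨ ((f i).2 : ℕ) ≠ (f j).2 := by
      by_contra hc
      push_neg at hc
      exact hne (Prod.ext (Fin.ext hc.1) (Fin.ext hc.2))
    simp only [hs, Fin.lt_def]
    omega
  have hsurj : Function.Surjective s :=
    Finite.surjective_of_injective hsm.injective
  have hrange : Set.range s = Set.range (id : Fin (m+n+1) → Fin (m+n+1)) := by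
    rw [Set.range_id, Set.range_eq_univ]; exact hsurj
  have inst : WellFoundedLT (Fin (m+n+1)) := inferInstance
  have : s = id := by
    exact (hsm.range_inj (strictMono_id : StrictMono (id : Fin (m+n+1) → Fin (m+n+1)))).1 hrange

  have := congrFun this k
  simpa [hs, Fin.ext_iff] using this


lemma ends {m n : ℕ} (f : Fin (m+n+1) → Fin (m+1) × Fin (n+1))
    (hsum : ∀ k : Fin (m+n+1), ((f k).1 : ℕ) + ((f k).2 : ℕ) = k) :
    f 0 = (0, 0) ∧ f (Fin.last (m+n)) = (Fin.last m, Fin.last n) := by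
  have h0 := hsum 0
  have hl := hsum (Fin.last (m+n))
  have h1 := (f (Fin.last (m+n))).1.is_le
  have h2 := (f (Fin.last (m+n))).2.is_le
  simp only [Fin.val_zero, Fin.val_last] at h0 hl
  constructor
  · rw [Prod.ext_iff, Fin.ext_iff, Fin.ext_iff]
    simp only [Fin.val_zero]
    omega
  · rw [Prod.ext_iff, Fin.ext_iff, Fin.ext_iff]
    simp only [Fin.val_last]
    omega

/-- count of elements of S with value < k -/
def cnt (S : Finset (Fin (m+n))) (k : ℕ) : ℕ := (S.filter fun j => j.val < k).card

lemma cnt_mono (S : Finset (Fin (m+n))) : Monotone (cnt S) := by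
  intro k k' hk
  apply Finset.card_le_card
  intro j hj
  simp only [Finset.mem_filter] at *
  exact ⟨hj.1, lt_of_lt_of_le hj.2 hk⟩

lemma cnt_le_card (S : Finset (Fin (m+n))) (k : ℕ) : cnt S k ≤ S.card :=
  Finset.card_le_card (Finset.filter_subset _ _)

lemma cnt_succ (S : Finset (Fin (m+n))) (k : ℕ) (hk : k < m+n) :
    cnt S (k+1) = cnt S k + (if (⟨k, hk⟩ : Fin (m+n)) ∈ S then 1 else 0) := by
  classical
  unfold cnt
  have heq : (S.filter fun j => j.val < k+1)
      = (S.filter fun j => j.val < k) ∪ (S.filter fun j => j = (⟨k, hk⟩ : Fin (m+n))) := by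
    ext j
    simp only [Finset.mem_filter, Finset.mem_union, Fin.ext_iff]
    by_cases hj : j ∈ S <;> simp [hj] <;> omega
  have hdisj : Disjoint (S.filter fun j => j.val < k)
      (S.filter fun j => j = (⟨k, hk⟩ : Fin (m+n))) := by
    rw [Finset.disjoint_filter]
    rintro j _ hj rfl
    simp at hj
  rw [heq, Finset.card_union_of_disjoint hdisj, Finset.filter_eq']
  split <;> simp

lemma cnt_zero (S : Finset (Fin (m+n))) : cnt S 0 = 0 := by simp [cnt]

lemma cnt_full (S : Finset (Fin (m+n))) : cnt S (m+n) = S.card := by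
  unfold cnt
  rw [Finset.filter_true_of_mem]
  intro j _; exact j.isLt

lemma cnt_compl (S : Finset (Fin (m+n))) (k : ℕ) (hk : k ≤ m+n) :
    cnt S k + cnt Sᶜ k = k := by
  induction k with
  | zero => simp [cnt_zero]
  | succ k ih =>
    have hk' : k < m+n := hk
    rw [cnt_succ S k hk', cnt_succ Sᶜ k hk']
    have := ih (le_of_lt hk)
    by_cases h : (⟨k, hk'⟩ : Fin (m+n)) ∈ S <;> simp [h, Finset.mem_compl] <;> omega

section Count

lemma step_le (f : Fin (m+n+1) → Fin (m+1) × Fin (n+1))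
    (hm : Monotone f)
    (hsum : ∀ k : Fin (m+n+1), ((f k).1 : ℕ) + ((f k).2 : ℕ) = k)
    (k : ℕ) (hk : k < m+n) :
    ((f ⟨k, by omega⟩).1 : ℕ) ≤ ((f ⟨k+1, by omega⟩).1 : ℕ) ∧
    ((f ⟨k+1, by omega⟩).1 : ℕ) ≤ ((f ⟨k, by omega⟩).1 : ℕ) + 1 := by
  have hle : f ⟨k, by omega⟩ ≤ f ⟨k+1, by omega⟩ := hm (by simp [Fin.le_def])
  rw [Prod.le_def] at hle
  have h1 : ((f ⟨k, by omega⟩).1 : ℕ) ≤ (f ⟨k+1, by omega⟩).1 := hle.1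
  have h2 : ((f ⟨k, by omega⟩).2 : ℕ) ≤ (f ⟨k+1, by omega⟩).2 := hle.2
  have e1 := hsum ⟨k, by omega⟩
  have e2 := hsum ⟨k+1, by omega⟩
  simp only at e1 e2
  omega

open Classical in
/-- the set of steps where the first coordinate jumps -/
noncomputable def stepSet (f : Fin (m+n+1) → Fin (m+1) × Fin (n+1)) : Finset (Fin (m+n)) :=
  Finset.univ.filter fun j : Fin (m+n) => ((f j.castSucc).1 : ℕ) ≠ ((f j.succ).1 : ℕ)

lemma cnt_stepSet (f : Fin (m+n+1) → Fin (m+1) × Fin (n+1))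
    (hm : Monotone f)
    (hsum : ∀ k : Fin (m+n+1), ((f k).1 : ℕ) + ((f k).2 : ℕ) = k)
    (k : ℕ) (hk : k ≤ m+n) :
    cnt (stepSet f) k = ((f ⟨k, by omega⟩).1 : ℕ) := by
  classical
  induction k with
  | zero =>
    rw [cnt_zero]
    have e0 := hsum ⟨0, by omega⟩
    simp only at e0
    omega
  | succ k ih =>
    have hk' : k < m+n := hk
    rw [cnt_succ _ k hk', ih (le_of_lt hk')]
    have hmem : (⟨k, hk'⟩ : Fin (m+n)) ∈ stepSet f ↔
        ((f ⟨k, by omega⟩).1 : ℕ) ≠ ((f ⟨k+1, by omega⟩).1 : ℕ) := by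
      simp only [stepSet, Finset.mem_filter, Finset.mem_univ, true_and, Fin.castSucc_mk,
        Fin.succ_mk]
    have hstep := step_le f hm hsum k hk'
    by_cases h : ((f ⟨k, by omega⟩).1 : ℕ) ≠ ((f ⟨k+1, by omega⟩).1 : ℕ)
    · rw [if_pos (hmem.2 h)]; omega
    · rw [if_neg (fun hc => h (hmem.1 hc))]; omega

lemma stepSet_card (f : Fin (m+n+1) → Fin (m+1) × Fin (n+1))
    (hm : Monotone f)
    (hsum : ∀ k : Fin (m+n+1), ((f k).1 : ℕ) + ((f k).2 : ℕ) = k)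
    (hlast : f (Fin.last (m+n)) = (Fin.last m, Fin.last n)) :
    (stepSet f).card = m := by
  have h := cnt_stepSet f hm hsum (m+n) le_rfl
  rw [cnt_full] at h
  have : (⟨m+n, by omega⟩ : Fin (m+n+1)) = Fin.last (m+n) := rfl
  rw [this, hlast] at h
  simpa using h


/-- the shuffle associated to a subset -/
noncomputable def ofSet (S : Finset (Fin (m+n))) (hS : S.card = m) :
    Fin (m+n+1) → Fin (m+1) × Fin (n+1) := fun k =>
  (⟨cnt S k, by have := cnt_le_card S k; omega⟩,
   ⟨cnt Sᶜ k, by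
      have := cnt_le_card Sᶜ k
      have hc : Sᶜ.card = n := by
        rw [Finset.card_compl, hS]
        simp
      omega⟩)

lemma ofSet_sum (S : Finset (Fin (m+n))) (hS : S.card = m) (k : Fin (m+n+1)) :
    ((ofSet S hS k).1 : ℕ) + ((ofSet S hS k).2 : ℕ) = (k : ℕ) :=
  cnt_compl S k (by omega)

lemma ofSet_monotone (S : Finset (Fin (m+n))) (hS : S.card = m) :
    Monotone (ofSet S hS) := by
  intro k k' hk
  rw [Prod.le_def]
  exact ⟨cnt_mono S (by exact_mod_cast hk), cnt_mono Sᶜ (by exact_mod_cast hk)⟩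

lemma ofSet_injective (S : Finset (Fin (m+n))) (hS : S.card = m) :
    Function.Injective (ofSet S hS) := by
  intro k k' h
  have h1 := ofSet_sum S hS k
  have h2 := ofSet_sum S hS k'
  rw [h] at h1
  exact Fin.ext (by omega)

open Classical in
noncomputable def shuffleEquiv (m n : ℕ) :
    {f : Fin (m+n+1) → Fin (m+1) × Fin (n+1) // Monotone f ∧ Function.Injective f} ≃
    {S : Finset (Fin (m+n)) // S.card = m} where
  toFun f := ⟨stepSet f.1, stepSet_card f.1 f.2.1 (sum_eq' f.1 f.2.1 f.2.2)
    (ends f.1 (sum_eq' f.1 f.2.1 f.2.2)).2⟩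
  invFun S := ⟨ofSet S.1 S.2, ofSet_monotone S.1 S.2, ofSet_injective S.1 S.2⟩
  left_inv := by
    rintro ⟨f, hm, hi⟩
    have hsum := sum_eq' f hm hi
    apply Subtype.ext
    funext k
    have h2 := cnt_stepSet f hm hsum k (by omega)
    simp only [Fin.eta] at h2
    have h1 := cnt_compl (stepSet f) (k : ℕ) (by omega)
    have h3 := hsum k
    show ofSet (stepSet f) (stepSet_card f hm hsum (ends f hsum).2) k = f k
    rw [Prod.ext_iff, Fin.ext_iff, Fin.ext_iff]
    constructor
    · show cnt (stepSet f) (k : ℕ) = ((f k).1 : ℕ)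
      omega
    · show cnt (stepSet f)ᶜ (k : ℕ) = ((f k).2 : ℕ)
      omega
  right_inv := by
    rintro ⟨S, hS⟩
    apply Subtype.ext
    show stepSet (ofSet S hS) = S
    ext j
    simp only [stepSet, Finset.mem_filter, Finset.mem_univ, true_and]
    have hc : ((ofSet S hS j.castSucc).1 : ℕ) = cnt S (j : ℕ) := rfl
    have hs : ((ofSet S hS j.succ).1 : ℕ) = cnt S ((j : ℕ)+1) := rfl
    rw [hc, hs, cnt_succ S j j.isLt]
    have hj : (⟨(j : ℕ), j.isLt⟩ : Fin (m+n)) = j := rfl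
    rw [hj]
    by_cases h : j ∈ S <;> simp [h]

lemma card_shuffles (m n : ℕ) :
    Nat.card {f : Fin (m+n+1) → Fin (m+1) × Fin (n+1) //
        Monotone f ∧ Function.Injective f} = Nat.choose (m+n) m := by
  classical
  rw [Nat.card_congr (shuffleEquiv m n), Nat.card_eq_fintype_card]
  simp [Fintype.card_finset_len]

end Count

section Extend
variable {m n r : ℕ}

/-- the first coordinate of the interpolating shuffle -/
def xval (g : Fin (r+1) → Fin (m+1) × Fin (n+1)) (k : ℕ) : ℕ :=
  max (k - n) (Finset.univ.sup fun j : Fin (r+1) => min ((g j).1 : ℕ) (k - ((g j).2 : ℕ)))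

lemma xval_le_m (g : Fin (r+1) → Fin (m+1) × Fin (n+1)) (k : ℕ) (hk : k ≤ m+n) :
    xval g k ≤ m := by
  apply max_le (by omega)
  apply Finset.sup_le
  intro j _
  have := (g j).1.is_le
  omega

lemma xval_le_k (g : Fin (r+1) → Fin (m+1) × Fin (n+1)) (k : ℕ) : xval g k ≤ k := by
  apply max_le (by omega)
  apply Finset.sup_le
  intro j _
  omega

lemma xval_lb (g : Fin (r+1) → Fin (m+1) × Fin (n+1)) (k : ℕ) : k - n ≤ xval g k :=
  le_max_left _ _

lemma xval_mono (g : Fin (r+1) → Fin (m+1) × Fin (n+1)) : Monotone (xval g) := by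
  intro k k' hk
  apply max_le
  · exact le_max_of_le_left (by omega)
  · apply Finset.sup_le
    intro j _
    apply le_max_of_le_right
    apply Finset.le_sup_of_le (Finset.mem_univ j)
    omega

lemma xval_add_le (g : Fin (r+1) → Fin (m+1) × Fin (n+1)) (k k' : ℕ) (hk : k ≤ k') :
    xval g k' ≤ xval g k + (k' - k) := by
  apply max_le
  · have := xval_lb g k
    omega
  · apply Finset.sup_le
    intro j _
    have hj : min ((g j).1 : ℕ) (k - ((g j).2 : ℕ)) ≤ xval g k :=
      le_max_of_le_right (Finset.le_sup (f := fun j => min ((g j).1 : ℕ) (k - ((g j).2 : ℕ))) (Finset.mem_univ j))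
    omega

lemma xval_at_chain (g : Fin (r+1) → Fin (m+1) × Fin (n+1)) (hg : Monotone g)
    (j : Fin (r+1)) :
    xval g (((g j).1 : ℕ) + ((g j).2 : ℕ)) = ((g j).1 : ℕ) := by
  apply le_antisymm
  · apply max_le
    · have := (g j).2.is_le
      omega
    · apply Finset.sup_le
      intro j' _
      rcases le_total j' j with h | h
      · have hle : g j' ≤ g j := hg h
        rw [Prod.le_def] at hle
        have h1 : ((g j').1 : ℕ) ≤ (g j).1 := hle.1
        omega
      · have hle : g j ≤ g j' := hg h
        rw [Prod.le_def] at hle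
        have h2 : ((g j).2 : ℕ) ≤ (g j').2 := hle.2
        omega
  · apply le_max_of_le_right
    refine Finset.le_sup_of_le (Finset.mem_univ j) ?_
    omega

lemma extend (r : ℕ) (g : Fin (r+1) → Fin (m+1) × Fin (n+1)) (hg : Monotone g) :
    ∃ (f : Fin (m+n+1) → Fin (m+1) × Fin (n+1)) (h : Fin (r+1) → Fin (m+n+1)),
      Monotone f ∧ Function.Injective f ∧ Monotone h ∧ g = f ∘ h := by
  refine ⟨fun k => (⟨xval g k, Nat.lt_succ_of_le (xval_le_m g k (by omega))⟩,
      ⟨(k : ℕ) - xval g k, by have := xval_lb g (k : ℕ); omega⟩),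
    fun j => ⟨((g j).1 : ℕ) + ((g j).2 : ℕ),
      by have := (g j).1.is_le; have := (g j).2.is_le; omega⟩, ?_, ?_, ?_, ?_⟩
  · intro k k' hk
    have hk' : (k : ℕ) ≤ (k' : ℕ) := hk
    rw [Prod.le_def]
    refine ⟨xval_mono g hk', ?_⟩
    show (k : ℕ) - xval g k ≤ (k' : ℕ) - xval g k'
    have h1 := xval_add_le g k k' hk'
    have h2 := xval_le_k g (k : ℕ)
    omega
  · intro k k' h
    rw [Prod.ext_iff, Fin.ext_iff, Fin.ext_iff] at h
    simp only at h
    have h1 := xval_le_k g (k : ℕ)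
    have h2 := xval_le_k g (k' : ℕ)
    exact Fin.ext (by omega)
  · intro j j' hj
    have hle : g j ≤ g j' := hg hj
    rw [Prod.le_def] at hle
    have h1 : ((g j).1 : ℕ) ≤ (g j').1 := hle.1
    have h2 : ((g j).2 : ℕ) ≤ (g j').2 := hle.2
    rw [Fin.mk_le_mk]
    omega
  · funext j
    rw [Function.comp_apply]
    have hx := xval_at_chain g hg j
    refine Prod.ext (Fin.ext ?_) (Fin.ext ?_)
    · exact hx.symm
    · show ((g j).2 : ℕ) = ((g j).1 : ℕ) + ((g j).2 : ℕ) - xval g (((g j).1 : ℕ) + ((g j).2 : ℕ))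
      omega

end Extend
end Stmt15Test

/-- The shuffle decomposition of `Δ[m] × Δ[n]`: an `r`-simplex of `Δ[m] × Δ[n]` is a
monotone map `Fin (r+1) → Fin (m+1) × Fin (n+1)` (componentwise order).  The
non-degenerate top-dimensional simplices are the injective monotone maps
`[m+n] → [m] × [n]`; each of them necessarily hits the extremes `(0,0)` and `(m,n)`;
there are `(m+n)!/(m!·n!) = binomial (m+n) m` of them (the `(m,n)`-shuffles); and every
simplex of `Δ[m] × Δ[n]` is a face of one of them. -/
theorem stmt_15 (m n : ℕ) :
    (∀ f : Fin (m+n+1) → Fin (m+1) × Fin (n+1), Monotone f → Function.Injective f →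
      (f 0 = (0, 0) ∧ f (Fin.last (m+n)) = (Fin.last m, Fin.last n))) ∧
    Nat.card {f : Fin (m+n+1) → Fin (m+1) × Fin (n+1) //
        Monotone f ∧ Function.Injective f} = Nat.choose (m+n) m ∧
    (∀ (r : ℕ) (g : Fin (r+1) → Fin (m+1) × Fin (n+1)), Monotone g →
      ∃ (f : Fin (m+n+1) → Fin (m+1) × Fin (n+1)) (h : Fin (r+1) → Fin (m+n+1)),
        Monotone f ∧ Function.Injective f ∧ Monotone h ∧ g = f ∘ h) := by
  refine ⟨fun f hm hi => Stmt15Test.ends f (Stmt15Test.sum_eq' f hm hi),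
    Stmt15Test.card_shuffles m n, fun r g hg => Stmt15Test.extend r g hg⟩
end

section
/- Let p ≥ 2 and n ≥ 1, and let K_{p,n}(t) = 1 + tⁿ · (p−1)/(1 − (p−1)(t + t² + ⋯ + tⁿ)) = (1 − (p−1)(t + ⋯ + t^{n−1}))/(1 − (p−1)(t + ⋯ + tⁿ)) be the rational generating function for the cell counts of the CW-complex |K(π,n)| with π of order p. Then evaluating at t = −1 gives K_{p,n}(−1) = p^{(−1)ⁿ}, i.e., K_{p,n}(−1) = p if n is even and K_{p,n}(−1) = 1/p if n is odd. -/
open Finset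

lemma sum_Icc_one_neg_one_pow {R : Type*} [Ring R] (n : ℕ) :
    ∑ i ∈ Icc 1 n, (-1 : R) ^ i = if Even n then 0 else -1 := by
  rw [← Ico_add_one_right_eq_Icc, sum_Ico_eq_sum_range, Nat.add_sub_cancel]
  simp only [pow_add, pow_one, ← mul_sum, neg_one_geom_sum]
  split_ifs <;> simp

lemma one_sub_mul_sum_Icc_one_neg_one_pow {R : Type*} [Ring R] (a : R) (n : ℕ) :
    1 - (a - 1) * ∑ i ∈ Icc 1 n, (-1 : R) ^ i = if Even n then 1 else a := by
  rw [sum_Icc_one_neg_one_pow]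
  split_ifs <;> simp

/-- Evaluation at `t = −1` of the rational generating function
`K_{p,n}(t) = (1 − (p−1)(t + ⋯ + t^{n−1}))/(1 − (p−1)(t + ⋯ + tⁿ))` for the cell counts
of the canonical `Θ_n`-set model of `K(π,n)` with `π` of order `p`: the denominator is
nonzero at `t = −1` and the value is `p^{(−1)ⁿ}`, i.e. `p` when `n` is even and `1/p`
when `n` is odd (the virtual Euler–Poincaré characteristic). -/
theorem stmt_18 (p n : ℕ) (hp : 2 ≤ p) (hn : 1 ≤ n) :
    (1 - ((p : ℚ) - 1) * ∑ i ∈ Finset.Icc 1 n, (-1 : ℚ) ^ i) ≠ 0 ∧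
    (1 - ((p : ℚ) - 1) * ∑ i ∈ Finset.Icc 1 (n - 1), (-1 : ℚ) ^ i) /
        (1 - ((p : ℚ) - 1) * ∑ i ∈ Finset.Icc 1 n, (-1 : ℚ) ^ i) =
      if Even n then (p : ℚ) else (p : ℚ)⁻¹ := by
  have hp0 : (p : ℚ) ≠ 0 := by exact_mod_cast (by omega : p ≠ 0)
  have h_parity : Even (n - 1) ↔ ¬Even n := by simp [Nat.even_sub hn]
  simp only [one_sub_mul_sum_Icc_one_neg_one_pow, h_parity]
  by_cases hn_even : Even n <;> simp [hn_even, hp0]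
end
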